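/- Let q ≥ 2, x ≥ 1, and m ≥ x+1 be integers. Let c be an admissible word of length m whose leftmost symbol equals q−1. Then the length-(m+1) word (q−1)·c obtained by prepending the symbol q−1 is admissible, and its lexicographic rank among admissible words of length m+1 equals the lexicographic rank of c among admissible words of length m, plus (q−1)·N_q(m,x) + (q−1)^{x+1}·N_q(m−x−1,x) − (q−1)·N_q(m−1,x). -/
import Mathlib


/-- A word `w` of length `m` over the alphabet `{0, ..., q-1}` (with `w ⟨m-1,_⟩` the
leftmost/most significant symbol) is admissible for the `Q^q_x` constraint if it contains
no forbidden pattern `(q-1) δ^r (q-1)` with `1 ≤ r ≤ x` and each symbol of `δ^r` at most `q-2`. -/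
def IsAdmissible (q x m : ℕ) (w : Fin m → Fin q) : Prop :=
  ∀ (i r : ℕ) (_hr1 : 1 ≤ r) (_hr2 : r ≤ x) (h : i + r + 1 < m),
    ¬((w ⟨i + r + 1, h⟩ : ℕ) = q - 1 ∧
      (w ⟨i, by omega⟩ : ℕ) = q - 1 ∧
      ∀ (j : ℕ) (_hj1 : 1 ≤ j) (_hj2 : j ≤ r), (w ⟨i + j, by omega⟩ : ℕ) ≤ q - 2)

/-- `Nadm q x m` is the number of admissible words of length `m`. -/
noncomputable def Nadm (q x m : ℕ) : ℕ :=
  Nat.card {w : Fin m → Fin q // IsAdmissible q x m w}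

/-- Lexicographic comparison of words of equal length: `w < w'` iff at the highest
index where they differ `w` has the smaller symbol. -/
def LexLt {q m : ℕ} (w w' : Fin m → Fin q) : Prop :=
  ∃ i : Fin m, w i < w' i ∧ ∀ j : Fin m, i < j → w j = w' j

/-- The lexicographic rank of a word among admissible words of its length. -/
noncomputable def rankOf (q x m : ℕ) (w : Fin m → Fin q) : ℕ :=
  Nat.card {v : Fin m → Fin q // IsAdmissible q x m v ∧ LexLt v w}

/-- helper: snoc evaluated at an interior index -/
lemma snoc_eval_lt {α : Type*} {m : ℕ} (u : Fin m → α) (a : α) {k : ℕ}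
    (hk : k < m + 1) (hk' : k < m) : (Fin.snoc u a : Fin (m+1) → α) ⟨k, hk⟩ = u ⟨k, hk'⟩ := by
  have h : (⟨k, hk⟩ : Fin (m+1)) = Fin.castSucc ⟨k, hk'⟩ := rfl
  rw [h, Fin.snoc_castSucc]

lemma snoc_eval_last {α : Type*} {m : ℕ} (u : Fin m → α) (a : α) (hk : m < m + 1) :
    (Fin.snoc u a : Fin (m+1) → α) ⟨m, hk⟩ = a := by
  have h : (⟨m, hk⟩ : Fin (m+1)) = Fin.last m := rfl
  rw [h, Fin.snoc_last]

/-- `u` ends (at the top) with `(q-1) δ^r` where every `δ` symbol is `≤ q-2`. -/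
def BadAt (q m r : ℕ) (u : Fin m → Fin q) : Prop :=
  ∃ _h : r + 1 ≤ m, ((u ⟨m - r - 1, by omega⟩ : Fin q) : ℕ) = q - 1 ∧
    ∀ j (_ : 1 ≤ j) (_ : j ≤ r), ((u ⟨m - r - 1 + j, by omega⟩ : Fin q) : ℕ) ≤ q - 2

def Bad (q x m : ℕ) (u : Fin m → Fin q) : Prop := ∃ r, 1 ≤ r ∧ r ≤ x ∧ BadAt q m r u

lemma adm_snoc_iff (q x m : ℕ) (u : Fin m → Fin q) (a : Fin q) :
    IsAdmissible q x (m+1) (Fin.snoc u a) ↔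
      IsAdmissible q x m u ∧ ((a : ℕ) = q - 1 → ¬ Bad q x m u) := by
  constructor
  · intro H
    constructor
    · intro i r h1 h2 h hpat
      refine H i r h1 h2 (by omega) ⟨?_, ?_, ?_⟩
      · rw [snoc_eval_lt u a _ h]; exact hpat.1
      · rw [snoc_eval_lt u a _ (by omega : i < m)]; exact hpat.2.1
      · intro j hj1 hj2
        rw [snoc_eval_lt u a _ (by omega : i + j < m)]; exact hpat.2.2 j hj1 hj2
    · intro ha hbad
      obtain ⟨r, hr1, hr2, hrm, htop, hmid⟩ := hbad
      refine H (m - r - 1) r hr1 hr2 (by omega) ⟨?_, ?_, ?_⟩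
      · have e : (⟨m - r - 1 + r + 1, by omega⟩ : Fin (m+1)) = ⟨m, by omega⟩ := by
          apply Fin.ext; simp; omega
        rw [e, snoc_eval_last]; exact ha
      · rw [snoc_eval_lt u a _ (by omega : m - r - 1 < m)]; exact htop
      · intro j hj1 hj2
        rw [snoc_eval_lt u a _ (by omega : m - r - 1 + j < m)]; exact hmid j hj1 hj2
  · rintro ⟨Hu, Hlast⟩ i r h1 h2 h ⟨hA, hB, hC⟩
    by_cases hlt : i + r + 1 < m
    · rw [snoc_eval_lt u a _ hlt] at hA
      rw [snoc_eval_lt u a _ (by omega : i < m)] at hB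
      refine Hu i r h1 h2 hlt ⟨hA, hB, ?_⟩
      intro j hj1 hj2
      have := hC j hj1 hj2
      rwa [snoc_eval_lt u a _ (by omega : i + j < m)] at this
    · have him : i + r + 1 = m := by omega
      have e : (⟨i + r + 1, h⟩ : Fin (m+1)) = ⟨m, by omega⟩ := by
        apply Fin.ext; simp [him]
      rw [e, snoc_eval_last] at hA
      refine Hlast hA ⟨r, h1, h2, (by omega : r + 1 ≤ m), ?_, ?_⟩
      · have e2 : (⟨m - r - 1, by omega⟩ : Fin m) = ⟨i, by omega⟩ := by
          apply Fin.ext; simp; omega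
        rw [e2]
        rw [snoc_eval_lt u a _ (by omega : i < m)] at hB; exact hB
      · intro j hj1 hj2
        have e2 : (⟨m - r - 1 + j, by omega⟩ : Fin m) = ⟨i + j, by omega⟩ := by
          apply Fin.ext; simp; omega
        rw [e2]
        have := hC j hj1 hj2
        rwa [snoc_eval_lt u a _ (by omega : i + j < m)] at this

lemma adm_restrict (q x m k : ℕ) (hk : k ≤ m) (v : Fin m → Fin q)
    (hv : ∀ p (hp : p < m), k ≤ p → ((v ⟨p, hp⟩ : Fin q) : ℕ) ≠ q - 1) :
    IsAdmissible q x m v ↔ IsAdmissible q x k (fun i : Fin k => v ⟨i.1, by omega⟩) := by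
  constructor
  · intro H i r h1 h2 h hpat
    exact H i r h1 h2 (by omega) ⟨hpat.1, hpat.2.1, fun j hj1 hj2 => hpat.2.2 j hj1 hj2⟩
  · intro H i r h1 h2 h hpat
    have htop : i + r + 1 < k := by
      by_contra hcon
      exact hv (i + r + 1) h (by omega) hpat.1
    exact H i r h1 h2 htop ⟨hpat.1, hpat.2.1, fun j hj1 hj2 => hpat.2.2 j hj1 hj2⟩

lemma lex_of_last_lt {q m : ℕ} (v w : Fin (m+1) → Fin q)
    (h : v (Fin.last m) < w (Fin.last m)) : LexLt v w :=
  ⟨Fin.last m, h, fun j hj => absurd hj (not_lt.2 (Fin.le_last j))⟩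

lemma lex_snoc_snoc_iff {q m : ℕ} (u c : Fin m → Fin q) (a : Fin q) :
    LexLt (Fin.snoc u a) (Fin.snoc c a) ↔ LexLt u c := by
  constructor
  · rintro ⟨i, hlt, hall⟩
    have hi : (i : ℕ) < m := by
      by_contra hcon
      have hil : i = Fin.last m := by
        apply Fin.ext
        have := i.isLt
        simp only [Fin.val_last]
        omega
      rw [hil, Fin.snoc_last, Fin.snoc_last] at hlt
      exact lt_irrefl _ hlt
    refine ⟨⟨i, hi⟩, ?_, ?_⟩
    · have e : i = Fin.castSucc ⟨i, hi⟩ := Fin.ext rfl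
      rw [e, Fin.snoc_castSucc, Fin.snoc_castSucc] at hlt
      exact hlt
    · intro j hj
      have := hall (Fin.castSucc j) (by
        simp only [Fin.lt_def] at hj ⊢
        simpa using hj)
      rwa [Fin.snoc_castSucc, Fin.snoc_castSucc] at this
  · rintro ⟨i, hlt, hall⟩
    refine ⟨Fin.castSucc i, by simpa using hlt, ?_⟩
    intro j hj
    by_cases hjm : (j : ℕ) < m
    · have e : j = Fin.castSucc ⟨j, hjm⟩ := Fin.ext rfl
      rw [e, Fin.snoc_castSucc, Fin.snoc_castSucc]
      apply hall
      rw [e] at hj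
      simpa [Fin.lt_def] using hj
    · have hjl : j = Fin.last m := by
        apply Fin.ext
        have := j.isLt
        simp only [Fin.val_last]
        omega
      rw [hjl, Fin.snoc_last, Fin.snoc_last]

lemma card_split {α : Type*} [Finite α] (P Q : α → Prop) :
    Nat.card {a // P a} = Nat.card {a // P a ∧ Q a} + Nat.card {a // P a ∧ ¬ Q a} := by
  classical
  have e : {a // P a ∧ Q a} ⊕ {a // P a ∧ ¬ Q a} ≃ {a // P a} :=
    (Equiv.sumCongr (Equiv.subtypeSubtypeEquivSubtypeInter P Q).symm
      (Equiv.subtypeSubtypeEquivSubtypeInter P (fun a => ¬ Q a)).symm).trans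
      (Equiv.sumCompl (fun x : {a // P a} => Q x.1))
  rw [← Nat.card_congr e, Nat.card_sum]

lemma card_ne_max (q : ℕ) (hq : 1 ≤ q) :
    Nat.card {a : Fin q // (a : ℕ) ≠ q - 1} = q - 1 := by
  have e : {a : Fin q // (a : ℕ) ≠ q - 1} ≃ Fin (q - 1) :=
    { toFun := fun a => ⟨a.1.1, by have h2 := a.1.isLt; have := a.2; omega⟩
      invFun := fun b => ⟨⟨b.1, by omega⟩, by have := b.isLt; simp; omega⟩
      left_inv := fun a => by apply Subtype.ext; apply Fin.ext; rfl
      right_inv := fun b => by apply Fin.ext; rfl }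
  rw [Nat.card_congr e, Nat.card_eq_fintype_card, Fintype.card_fin]

/-- admissible words of length `m` with given top-symbol condition removed:
words with top symbol ≠ q-1 correspond to pairs. -/
def neTopEquiv (q x m : ℕ) :
    {v : Fin (m+1) → Fin q // IsAdmissible q x (m+1) v ∧ ((v (Fin.last m) : ℕ) ≠ q - 1)} ≃
      {a : Fin q // (a : ℕ) ≠ q - 1} × {u : Fin m → Fin q // IsAdmissible q x m u} where
  toFun v := ⟨⟨v.1 (Fin.last m), v.2.2⟩, ⟨Fin.init v.1, by
    have h := v.2.1
    rw [← Fin.snoc_init_self v.1, adm_snoc_iff] at h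
    exact h.1⟩⟩
  invFun p := ⟨Fin.snoc p.2.1 p.1.1, by
    rw [adm_snoc_iff]
    exact ⟨p.2.2, fun h => absurd h p.1.2⟩, by
    rw [Fin.snoc_last]; exact p.1.2⟩
  left_inv v := by
    apply Subtype.ext
    exact Fin.snoc_init_self v.1
  right_inv p := by
    refine Prod.ext (Subtype.ext ?_) (Subtype.ext ?_)
    · show (Fin.snoc p.2.1 p.1.1 : Fin (m+1) → Fin q) (Fin.last m) = p.1.1
      exact Fin.snoc_last _ _
    · exact Fin.init_snoc (α := fun _ => Fin q) p.1.1 p.2.1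

lemma card_neTop (q x m : ℕ) (hq : 1 ≤ q) :
    Nat.card {v : Fin (m+1) → Fin q // IsAdmissible q x (m+1) v ∧ ((v (Fin.last m) : ℕ) ≠ q - 1)}
      = (q - 1) * Nadm q x m := by
  rw [Nat.card_congr (neTopEquiv q x m), Nat.card_prod, card_ne_max q (by omega)]
  rfl

noncomputable def Atop (q x k : ℕ) : ℕ :=
  Nat.card {w : Fin k → Fin q // IsAdmissible q x k w ∧
    ∀ _hk : 0 < k, ((w ⟨k - 1, by omega⟩ : Fin q) : ℕ) = q - 1}

lemma Nadm_succ (q x m : ℕ) (hq : 1 ≤ q) :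
    Nadm q x (m+1) = Atop q x (m+1) + (q - 1) * Nadm q x m := by
  rw [Nadm, card_split (IsAdmissible q x (m+1)) (fun v => ((v (Fin.last m) : ℕ) = q - 1))]
  congr 1
  · apply Nat.card_congr (Equiv.subtypeEquivRight _)
    intro v
    exact ⟨fun h => ⟨h.1, fun _ => h.2⟩, fun h => ⟨h.1, h.2 (by omega)⟩⟩
  · rw [← card_neTop q x m hq]

def padWord (q m r : ℕ) (f : Fin r → Fin (q-1)) (w : Fin (m-r) → Fin q) : Fin m → Fin q :=
  fun i => if h : i.1 < m - r then w ⟨i.1, h⟩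
    else Fin.castLE (Nat.sub_le q 1) (f ⟨i.1 - (m-r), by have := i.isLt; omega⟩)

lemma padWord_lo (q m r : ℕ) (f : Fin r → Fin (q-1)) (w : Fin (m-r) → Fin q)
    {i : ℕ} (him : i < m) (hi : i < m - r) : padWord q m r f w ⟨i, him⟩ = w ⟨i, hi⟩ :=
  dif_pos hi

lemma padWord_hi (q m r : ℕ) (f : Fin r → Fin (q-1)) (w : Fin (m-r) → Fin q)
    {i : ℕ} (him : i < m) (hi : ¬ i < m - r) :
    ((padWord q m r f w ⟨i, him⟩ : Fin q) : ℕ) = ((f ⟨i - (m-r), by omega⟩ : Fin (q-1)) : ℕ) := by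
  show ((dite _ _ _ : Fin q) : ℕ) = _
  rw [dif_neg hi]
  rfl

lemma badAt_hi (q m r : ℕ) (u : Fin m → Fin q) (hb : BadAt q m r u)
    (p : ℕ) (hp : p < m) (hpk : m - r ≤ p) : ((u ⟨p, hp⟩ : Fin q) : ℕ) ≤ q - 2 := by
  obtain ⟨h, _htop, hmid⟩ := hb
  have h2 := hmid (p - (m - r) + 1) (by omega) (by omega)
  have e : (⟨m - r - 1 + (p - (m - r) + 1), by omega⟩ : Fin m) = ⟨p, hp⟩ := by
    apply Fin.ext; simp; omega
  rwa [e] at h2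

lemma padWord_eta (q m r : ℕ) (hrm : r ≤ m) (u : Fin m → Fin q)
    (f : Fin r → Fin (q-1)) (w : Fin (m-r) → Fin q)
    (hf : ∀ j : Fin r, ((f j : Fin (q-1)) : ℕ)
      = ((u ⟨m - r + j.1, by have := j.isLt; omega⟩ : Fin q) : ℕ))
    (hw : ∀ i : Fin (m-r), w i = u ⟨i.1, by have := i.isLt; omega⟩) :
    padWord q m r f w = u := by
  funext i
  by_cases hi : i.1 < m - r
  · rw [show i = (⟨i.1, i.isLt⟩ : Fin m) from Fin.ext rfl, padWord_lo q m r f w i.isLt hi, hw]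
  · apply Fin.ext
    rw [show i = (⟨i.1, i.isLt⟩ : Fin m) from Fin.ext rfl, padWord_hi q m r f w i.isLt hi, hf]
    exact congrArg (fun t : Fin m => ((u t : Fin q) : ℕ))
      (Fin.ext (by simp only [Fin.val_mk]; omega))

lemma padWord_f (q m r : ℕ) (hrm : r ≤ m) (f : Fin r → Fin (q-1)) (w : Fin (m-r) → Fin q)
    (j : Fin r) :
    ((padWord q m r f w ⟨m - r + j.1, by have := j.isLt; omega⟩ : Fin q) : ℕ)
      = ((f j : Fin (q-1)) : ℕ) := by
  rw [padWord_hi q m r f w (by have := j.isLt; omega) (by omega)]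
  exact congrArg (fun t : Fin r => ((f t : Fin (q-1)) : ℕ))
    (Fin.ext (by simp only [Fin.val_mk]; omega))

lemma card_badAt (q x m r : ℕ) (hq : 2 ≤ q) (hr1 : 1 ≤ r) (hrm : r + 1 ≤ m) :
    Nat.card {u : Fin m → Fin q // IsAdmissible q x m u ∧ BadAt q m r u}
      = (q - 1) ^ r * Atop q x (m - r) := by
  have hk1 : 1 ≤ m - r := by omega
  have E : {u : Fin m → Fin q // IsAdmissible q x m u ∧ BadAt q m r u}
      ≃ (Fin r → Fin (q-1)) × {w : Fin (m-r) → Fin q // IsAdmissible q x (m-r) w ∧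
          ∀ _hk : 0 < m - r, ((w ⟨m - r - 1, by omega⟩ : Fin q) : ℕ) = q - 1} :=
    { toFun := fun u =>
        ⟨fun j => ⟨(u.1 ⟨m - r + j.1, by have := j.isLt; omega⟩ : Fin q).1, by
            have h2 := badAt_hi q m r u.1 u.2.2 (m - r + j.1)
              (by have := j.isLt; omega) (by omega)
            omega⟩,
         ⟨fun i => u.1 ⟨i.1, by have := i.isLt; omega⟩, by
            constructor
            · exact (adm_restrict q x m (m-r) (Nat.sub_le m r) u.1
                (fun p hp hpk hcon => by
                  have h2 := badAt_hi q m r u.1 u.2.2 p hp hpk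
                  omega)).mp u.2.1
            · intro _
              exact u.2.2.2.1⟩⟩
      invFun := fun p =>
        ⟨padWord q m r p.1 p.2.1, by
          have hrest : (fun i : Fin (m-r) =>
              padWord q m r p.1 p.2.1 ⟨i.1, by have := i.isLt; omega⟩) = p.2.1 := by
            funext i
            exact padWord_lo q m r p.1 p.2.1 _ i.isLt
          have hb : BadAt q m r (padWord q m r p.1 p.2.1) := by
            refine ⟨hrm, ?_, ?_⟩
            · rw [padWord_lo q m r p.1 p.2.1 (by omega) (by omega)]
              exact p.2.2.2 (by omega)
            · intro j hj1 hj2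
              rw [padWord_hi q m r p.1 p.2.1 (by omega) (by omega)]
              have := (p.1 ⟨m - r - 1 + j - (m - r), by omega⟩).isLt
              omega
          refine ⟨?_, hb⟩
          rw [adm_restrict q x m (m-r) (Nat.sub_le m r)
            (padWord q m r p.1 p.2.1)
            (fun pp hp hpk hcon => by
              rw [padWord_hi q m r p.1 p.2.1 hp (by omega)] at hcon
              have := (p.1 ⟨pp - (m - r), by omega⟩).isLt
              omega), hrest]
          exact p.2.2.1⟩
      left_inv := fun u => Subtype.ext
        (padWord_eta q m r (by omega) u.1 _ _ (fun j => rfl) (fun i => rfl))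
      right_inv := fun p => by
        refine Prod.ext ?_ (Subtype.ext ?_)
        · funext j
          exact Fin.ext (padWord_f q m r (by omega) p.1 p.2.1 j)
        · funext i
          exact padWord_lo q m r p.1 p.2.1 _ i.isLt }
  rw [Nat.card_congr E, Nat.card_prod, Nat.card_fun, Nat.card_eq_fintype_card,
    Nat.card_eq_fintype_card, Fintype.card_fin, Fintype.card_fin]
  rfl

lemma badAt_disjoint (q m r r' : ℕ) (hq : 2 ≤ q) (hrr : r < r') (u : Fin m → Fin q)
    (h1 : BadAt q m r u) (h2 : BadAt q m r' u) : False := by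
  obtain ⟨hm, htop, _⟩ := h1
  obtain ⟨hm', _, hmid'⟩ := h2
  have h3 := hmid' (r' - r) (by omega) (by omega)
  have e : (⟨m - r' - 1 + (r' - r), by omega⟩ : Fin m) = ⟨m - r - 1, by omega⟩ := by
    apply Fin.ext; simp; omega
  rw [e] at h3
  omega

lemma bad_top_le (q x m : ℕ) (hm : 1 ≤ m) (u : Fin m → Fin q) (hb : Bad q x m u) :
    ((u ⟨m - 1, by omega⟩ : Fin q) : ℕ) ≤ q - 2 := by
  obtain ⟨r, hr1, hr2, hrm, _htop, hmid⟩ := hb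
  have h3 := hmid r hr1 le_rfl
  have e : (⟨m - r - 1 + r, by omega⟩ : Fin m) = ⟨m - 1, by omega⟩ := by
    apply Fin.ext; simp; omega
  rwa [e] at h3

lemma bad_lex (q x m : ℕ) (hq : 2 ≤ q) (hm : 1 ≤ m) (u c : Fin m → Fin q)
    (hlead : ((c ⟨m - 1, by omega⟩ : Fin q) : ℕ) = q - 1) (hb : Bad q x m u) : LexLt u c := by
  have h3 := bad_top_le q x m hm u hb
  refine ⟨⟨m - 1, by omega⟩, ?_, ?_⟩
  · rw [Fin.lt_def]
    omega
  · intro j hj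
    rw [Fin.lt_def] at hj
    have := j.isLt
    simp only [Fin.val_mk] at hj
    omega

lemma bad_card (q X : ℕ) (hq : 2 ≤ q) :
    ∀ y, y ≤ X → ∀ m, y + 1 ≤ m →
      (Nat.card {u : Fin m → Fin q // IsAdmissible q X m u ∧ Bad q y m u} : ℤ)
        = ((q:ℤ) - 1) * Nadm q X (m-1) - ((q:ℤ) - 1)^(y+1) * Nadm q X (m-y-1) := by
  intro y
  induction y with
  | zero =>
    intro _ m hm
    haveI : IsEmpty {u : Fin m → Fin q // IsAdmissible q X m u ∧ Bad q 0 m u} := by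
      constructor
      rintro ⟨u, _, r, hr1, hr2, _⟩
      omega
    rw [Nat.card_of_isEmpty]
    have e : m - 0 - 1 = m - 1 := by omega
    rw [e, pow_one]
    push_cast
    ring
  | succ y ih =>
    intro hyX m hm
    have split := card_split (fun u : Fin m → Fin q =>
        IsAdmissible q X m u ∧ Bad q (y+1) m u) (fun u => BadAt q m (y+1) u)
    have e1 : Nat.card {u : Fin m → Fin q //
        (IsAdmissible q X m u ∧ Bad q (y+1) m u) ∧ BadAt q m (y+1) u}
        = Nat.card {u : Fin m → Fin q // IsAdmissible q X m u ∧ BadAt q m (y+1) u} := by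
      apply Nat.card_congr (Equiv.subtypeEquivRight _)
      intro u
      constructor
      · rintro ⟨⟨ha, _⟩, hb⟩; exact ⟨ha, hb⟩
      · rintro ⟨ha, hb⟩; exact ⟨⟨ha, ⟨y+1, by omega, by omega, hb⟩⟩, hb⟩
    have e2 : Nat.card {u : Fin m → Fin q //
        (IsAdmissible q X m u ∧ Bad q (y+1) m u) ∧ ¬ BadAt q m (y+1) u}
        = Nat.card {u : Fin m → Fin q // IsAdmissible q X m u ∧ Bad q y m u} := by
      apply Nat.card_congr (Equiv.subtypeEquivRight _)
      intro u
      constructor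
      · rintro ⟨⟨ha, r, hr1, hr2, hb⟩, hnb⟩
        refine ⟨ha, r, hr1, ?_, hb⟩
        rcases Nat.lt_or_ge r (y+1) with h | h
        · omega
        · exfalso
          have : r = y + 1 := by omega
          exact hnb (this ▸ hb)
      · rintro ⟨ha, r, hr1, hr2, hb⟩
        exact ⟨⟨ha, ⟨r, hr1, by omega, hb⟩⟩,
          fun hb' => badAt_disjoint q m r (y+1) hq (by omega) u hb hb'⟩
    have e3 := card_badAt q X m (y+1) hq (by omega) (by omega)
    have e4 : Nadm q X (m-y-1) = Atop q X (m-y-1) + (q - 1) * Nadm q X (m-y-2) := by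
      have e : m - y - 1 = (m - y - 2) + 1 := by omega
      rw [e, Nadm_succ q X (m-y-2) (by omega)]
    have e5 := ih (by omega) m (by omega)
    have e6 : m - (y+1) = m - y - 1 := by omega
    have e7 : m - (y+1) - 1 = m - y - 2 := by omega
    rw [e6] at e3
    rw [e7]
    have hcast1 : ((q - 1 : ℕ) : ℤ) = (q : ℤ) - 1 := by
      push_cast [Nat.cast_sub (by omega : 1 ≤ q)]; ring
    have := split
    rw [e1, e2, e3] at this
    have hz : (Nat.card {u : Fin m → Fin q // IsAdmissible q X m u ∧ Bad q (y+1) m u} : ℤ)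
        = (Nat.card {u : Fin m → Fin q // IsAdmissible q X m u ∧ Bad q y m u} : ℤ)
          + ((q:ℤ) - 1)^(y+1) * (Atop q X (m - y - 1) : ℤ) := by
      rw [this]
      push_cast [hcast1]
      ring
    have hz4 : (Atop q X (m-y-1) : ℤ) = (Nadm q X (m-y-1) : ℤ)
        - ((q:ℤ) - 1) * (Nadm q X (m-y-2) : ℤ) := by
      rw [e4]
      push_cast [hcast1]
      ring
    rw [hz, e5, hz4]
    ring


/-- prepending the symbol `q-1` to an admissible word starting with `q-1`
preserves admissibility and shifts the rank by
`(q-1)N_q(m,x) + (q-1)^{x+1}N_q(m-x-1,x) - (q-1)N_q(m-1,x)`. -/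
theorem stmt_9 (q x m : ℕ) (hq : 2 ≤ q) (hx : 1 ≤ x) (hm : x + 1 ≤ m)
    (c : Fin m → Fin q) (hc : IsAdmissible q x m c)
    (hlead : (c ⟨m - 1, by omega⟩ : ℕ) = q - 1) :
    IsAdmissible q x (m + 1) (Fin.snoc c ⟨q - 1, by omega⟩) ∧
    (rankOf q x (m + 1) (Fin.snoc c ⟨q - 1, by omega⟩) : ℤ) =
      rankOf q x m c + ((q : ℤ) - 1) * Nadm q x m
        + ((q : ℤ) - 1) ^ (x + 1) * Nadm q x (m - x - 1)
        - ((q : ℤ) - 1) * Nadm q x (m - 1) := by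
  have hm1 : 1 ≤ m := by omega
  have hq1 : q - 1 < q := by omega
  have hnotbad : ¬ Bad q x m c := fun hbad => by
    have := bad_top_le q x m hm1 c hbad
    omega
  have adm1 : IsAdmissible q x (m + 1) (Fin.snoc c ⟨q - 1, hq1⟩) :=
    (adm_snoc_iff q x m c ⟨q - 1, hq1⟩).mpr ⟨hc, fun _ => hnotbad⟩
  refine ⟨adm1, ?_⟩
  have hbval : ((⟨q - 1, hq1⟩ : Fin q) : ℕ) = q - 1 := rfl
  -- split rank of the prepended word by top symbol
  have split1 := card_split (fun v : Fin (m+1) → Fin q =>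
      IsAdmissible q x (m+1) v ∧ LexLt v (Fin.snoc c ⟨q - 1, hq1⟩))
      (fun v => (v (Fin.last m) : ℕ) = q - 1)
  -- top symbol = q-1 part
  have E2 : {v : Fin (m+1) → Fin q //
        (IsAdmissible q x (m+1) v ∧ LexLt v (Fin.snoc c ⟨q - 1, hq1⟩))
          ∧ (v (Fin.last m) : ℕ) = q - 1}
      ≃ {u : Fin m → Fin q // (IsAdmissible q x m u ∧ ¬ Bad q x m u) ∧ LexLt u c} :=
    { toFun := fun v => by
        have hlast : v.1 (Fin.last m) = ⟨q - 1, hq1⟩ := Fin.ext (by rw [v.2.2])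
        have hv : v.1 = Fin.snoc (Fin.init v.1) (⟨q - 1, hq1⟩ : Fin q) :=
          (Fin.snoc_init_self v.1).symm.trans
            (congrArg (fun t : Fin q => Fin.snoc (Fin.init v.1) t) hlast)
        have h := (adm_snoc_iff q x m (Fin.init v.1) ⟨q - 1, hq1⟩).mp (hv ▸ v.2.1.1)
        refine ⟨Fin.init v.1, ⟨h.1, h.2 hbval⟩, ?_⟩
        refine (lex_snoc_snoc_iff (Fin.init v.1) c ⟨q - 1, hq1⟩).mp ?_
        rw [← hv]
        exact v.2.1.2
      invFun := fun u =>
        ⟨Fin.snoc u.1 ⟨q - 1, hq1⟩,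
          ⟨⟨(adm_snoc_iff q x m u.1 ⟨q - 1, hq1⟩).mpr ⟨u.2.1.1, fun _ => u.2.1.2⟩,
            (lex_snoc_snoc_iff u.1 c ⟨q - 1, hq1⟩).mpr u.2.2⟩,
          by rw [Fin.snoc_last]⟩⟩
      left_inv := fun v => by
        apply Subtype.ext
        have hlast : v.1 (Fin.last m) = ⟨q - 1, hq1⟩ := Fin.ext (by rw [v.2.2])
        show Fin.snoc (Fin.init v.1) (⟨q - 1, hq1⟩ : Fin q) = v.1
        exact (congrArg (fun t : Fin q => Fin.snoc (Fin.init v.1) t) hlast).symm.trans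
          (Fin.snoc_init_self v.1)
      right_inv := fun u => by
        apply Subtype.ext
        exact Fin.init_snoc (α := fun _ => Fin q) ⟨q - 1, hq1⟩ u.1 }
  -- top symbol ≠ q-1 part
  have e3 : Nat.card {v : Fin (m+1) → Fin q //
        (IsAdmissible q x (m+1) v ∧ LexLt v (Fin.snoc c ⟨q - 1, hq1⟩))
          ∧ ¬ (v (Fin.last m) : ℕ) = q - 1}
      = (q - 1) * Nadm q x m := by
    rw [← card_neTop q x m (le_trans one_le_two hq)]
    apply Nat.card_congr (Equiv.subtypeEquivRight _)
    intro v
    constructor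
    · rintro ⟨⟨ha, _⟩, hne⟩; exact ⟨ha, hne⟩
    · rintro ⟨ha, hne⟩
      refine ⟨⟨ha, lex_of_last_lt v _ ?_⟩, hne⟩
      rw [Fin.lt_def, Fin.snoc_last]
      show _ < q - 1
      exact Nat.lt_of_le_of_ne (Nat.le_pred_of_lt (v (Fin.last m)).isLt) hne
  -- split rank of c by badness
  have split2 := card_split (fun u : Fin m → Fin q =>
      IsAdmissible q x m u ∧ LexLt u c) (Bad q x m)
  have e4 : Nat.card {u : Fin m → Fin q //
        (IsAdmissible q x m u ∧ LexLt u c) ∧ Bad q x m u}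
      = Nat.card {u : Fin m → Fin q // IsAdmissible q x m u ∧ Bad q x m u} := by
    apply Nat.card_congr (Equiv.subtypeEquivRight _)
    intro u
    constructor
    · rintro ⟨⟨ha, _⟩, hb⟩; exact ⟨ha, hb⟩
    · rintro ⟨ha, hb⟩
      exact ⟨⟨ha, bad_lex q x m hq hm1 u c hlead hb⟩, hb⟩
  have e5 : Nat.card {u : Fin m → Fin q //
        (IsAdmissible q x m u ∧ LexLt u c) ∧ ¬ Bad q x m u}
      = Nat.card {u : Fin m → Fin q //
          (IsAdmissible q x m u ∧ ¬ Bad q x m u) ∧ LexLt u c} := by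
    apply Nat.card_congr (Equiv.subtypeEquivRight _)
    intro u
    constructor
    · rintro ⟨⟨ha, hl⟩, hb⟩; exact ⟨⟨ha, hb⟩, hl⟩
    · rintro ⟨⟨ha, hb⟩, hl⟩; exact ⟨⟨ha, hl⟩, hb⟩
  have ebad := bad_card q x hq x le_rfl m hm
  have hrank1 : rankOf q x (m+1) (Fin.snoc c ⟨q - 1, hq1⟩)
      = Nat.card {u : Fin m → Fin q //
          (IsAdmissible q x m u ∧ ¬ Bad q x m u) ∧ LexLt u c}
        + (q - 1) * Nadm q x m := by
    rw [rankOf, split1, e3, Nat.card_congr E2]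
  have hrank2 : rankOf q x m c
      = Nat.card {u : Fin m → Fin q // IsAdmissible q x m u ∧ Bad q x m u}
        + Nat.card {u : Fin m → Fin q //
            (IsAdmissible q x m u ∧ ¬ Bad q x m u) ∧ LexLt u c} := by
    rw [rankOf, split2, e4, e5]
  have hgoal : (rankOf q x (m + 1) (Fin.snoc c ⟨q - 1, hq1⟩) : ℤ) =
      rankOf q x m c + ((q : ℤ) - 1) * Nadm q x m
        + ((q : ℤ) - 1) ^ (x + 1) * Nadm q x (m - x - 1)
        - ((q : ℤ) - 1) * Nadm q x (m - 1) := by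
    rw [hrank1, hrank2]
    have hcast1 : ((q - 1 : ℕ) : ℤ) = (q : ℤ) - 1 := by
      rw [Nat.cast_sub (le_trans one_le_two hq)]
      norm_num
    push_cast [hcast1]
    linarith [ebad]
  exact hgoal
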